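/- Let n ≥ 3. For any two completely independent spanning trees T_1 and T_2 of the graph P_n^+, one has ||I(T_1)| − |I(T_2)|| ≥ n − 2. -/

import Mathlib

open SimpleGraph

variable {V : Type*}

/-- `T` is a spanning tree of `G`: a subgraph on all of `V` that is connected and acyclic. -/
def IsSpanningTree (G T : SimpleGraph V) : Prop :=
  T ≤ G ∧ T.Connected ∧ T.IsAcyclic

/-- The set of inner vertices of `T` (degree at least 2). -/
def innerSet (T : SimpleGraph V) : Set V :=
  {v | 2 ≤ (T.neighborSet v).ncard}

/-- Vertices that are inner vertices of at least two trees of the family. -/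
def innerMulti {k : ℕ} (T : Fin k → SimpleGraph V) : Set V :=
  {v | ∃ i j : Fin k, i ≠ j ∧ v ∈ innerSet (T i) ∧ v ∈ innerSet (T j)}

/-- Edges that belong to at least two trees of the family. -/
def edgeMulti {k : ℕ} (T : Fin k → SimpleGraph V) : Set (Sym2 V) :=
  {e | ∃ i j : Fin k, i ≠ j ∧ e ∈ (T i).edgeSet ∧ e ∈ (T j).edgeSet}

/-- A connected dominating set. -/
def IsConnDomSet (G : SimpleGraph V) (D : Set V) : Prop :=
  (G.induce D).Connected ∧ ∀ v ∉ D, ∃ w ∈ D, G.Adj v w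

/-- The graph `Pₙ⁺`: a path on `n` vertices, a universal vertex `u = Sum.inr false`
adjacent to every path vertex, and a vertex `v = Sum.inr true` adjacent to `u` and to
the two endpoints of the path. -/
def pathStarPlus (n : ℕ) : SimpleGraph (Fin n ⊕ Bool) :=
  SimpleGraph.fromRel (fun x y =>
    match x, y with
    | Sum.inl a, Sum.inl b => a.1 + 1 = b.1
    | Sum.inl _, Sum.inr false => True
    | Sum.inl a, Sum.inr true => a.1 = 0 ∨ a.1 = n - 1
    | Sum.inr false, Sum.inr true => True
    | _, _ => False)

section DegreeLemmas
set_option linter.unreachableTactic false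
set_option linter.unusedTactic false
set_option linter.unnecessarySeqFocus false

lemma psp_degree_u (n : ℕ) [DecidableRel (pathStarPlus n).Adj] :
    (pathStarPlus n).degree (Sum.inr false) = n + 1 := by
  have h : (pathStarPlus n).neighborFinset (Sum.inr false) = Finset.univ.erase (Sum.inr false) := by
    ext y
    simp only [mem_neighborFinset]
    rcases y with a | b
    · simp [pathStarPlus]
    · cases b <;> simp [pathStarPlus]
  rw [degree, h, Finset.card_erase_of_mem (Finset.mem_univ _)]
  simp

lemma psp_degree_v (n : ℕ) (hn : 3 ≤ n) [DecidableRel (pathStarPlus n).Adj] :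
    (pathStarPlus n).degree (Sum.inr true) = 3 := by
  have h : (pathStarPlus n).neighborFinset (Sum.inr true) =
      {Sum.inr false, Sum.inl ⟨0, by omega⟩, Sum.inl ⟨n-1, by omega⟩} := by
    ext y
    simp only [mem_neighborFinset]
    rcases y with a | b
    · simp [pathStarPlus, Fin.ext_iff]
    · cases b <;> simp [pathStarPlus]
  rw [degree, h]
  rw [Finset.card_insert_of_notMem (by simp [Fin.ext_iff]),
    Finset.card_insert_of_notMem (by simp [Fin.ext_iff]; omega), Finset.card_singleton]

lemma psp_degree_inl (n : ℕ) (hn : 3 ≤ n) [DecidableRel (pathStarPlus n).Adj] (a : Fin n) :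
    (pathStarPlus n).degree (Sum.inl a) = 3 := by
  have ha := a.2
  rcases eq_or_ne a.1 0 with h0 | h0
  · have h : (pathStarPlus n).neighborFinset (Sum.inl a) =
        {Sum.inr false, Sum.inr true, Sum.inl ⟨1, by omega⟩} := by
      ext y
      simp only [mem_neighborFinset]
      rcases y with b | c
      · have hb := b.2
        simp [pathStarPlus, Fin.ext_iff]; omega
      · cases c <;> simp [pathStarPlus] <;> omega
    rw [degree, h]
    rw [Finset.card_insert_of_notMem (by simp), Finset.card_insert_of_notMem (by simp),
      Finset.card_singleton]
  · rcases eq_or_ne a.1 (n-1) with h1 | h1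
    · have h : (pathStarPlus n).neighborFinset (Sum.inl a) =
          {Sum.inr false, Sum.inr true, Sum.inl ⟨n-2, by omega⟩} := by
        ext y
        simp only [mem_neighborFinset]
        rcases y with b | c
        · have hb := b.2
          simp [pathStarPlus, Fin.ext_iff]; omega
        · cases c <;> simp [pathStarPlus] <;> omega
      rw [degree, h]
      rw [Finset.card_insert_of_notMem (by simp), Finset.card_insert_of_notMem (by simp),
        Finset.card_singleton]
    · have h : (pathStarPlus n).neighborFinset (Sum.inl a) =
          {Sum.inr false, Sum.inl ⟨a.1-1, by omega⟩, Sum.inl ⟨a.1+1, by omega⟩} := by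
        ext y
        simp only [mem_neighborFinset]
        rcases y with b | c
        · have hb := b.2
          simp [pathStarPlus, Fin.ext_iff]; omega
        · cases c <;> simp [pathStarPlus] <;> omega
      rw [degree, h]
      rw [Finset.card_insert_of_notMem (by simp [Fin.ext_iff]),
        Finset.card_insert_of_notMem (by simp [Fin.ext_iff] <;> omega), Finset.card_singleton]

end DegreeLemmas

lemma ncard_neighborSet_eq_degree {V : Type*} [Fintype V] (G : SimpleGraph V)
    [DecidableRel G.Adj] (x : V) : (G.neighborSet x).ncard = G.degree x := by
  rw [Set.ncard_eq_toFinset_card', Set.toFinset_card, card_neighborSet_eq_degree]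

lemma connected_one_le_degree {V : Type*} [Fintype V] {G : SimpleGraph V} [DecidableRel G.Adj]
    (h : G.Connected) (hc : 2 ≤ Fintype.card V) (x : V) : 1 ≤ G.degree x := by
  rw [Nat.one_le_iff_ne_zero, ← Nat.pos_iff_ne_zero, degree_pos_iff_exists_adj]
  obtain ⟨y, hy⟩ := Fintype.exists_ne_of_one_lt_card (by omega) x
  obtain ⟨w⟩ := h.preconnected x y
  cases w with
  | nil => exact absurd rfl hy
  | cons h' _ => exact ⟨_, h'⟩

lemma aux_cist (n : ℕ) (hn : 3 ≤ n) (T₁ T₂ : SimpleGraph (Fin n ⊕ Bool))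
    (h₁ : IsSpanningTree (pathStarPlus n) T₁)
    (h₂ : IsSpanningTree (pathStarPlus n) T₂)
    (hedge : Disjoint T₁.edgeSet T₂.edgeSet)
    (hinner : Disjoint (innerSet T₁) (innerSet T₂))
    (hu : Sum.inr false ∉ innerSet T₂) :
    (n : ℤ) - 2 ≤ ((innerSet T₂).ncard : ℤ) - ((innerSet T₁).ncard : ℤ) := by
  classical
  have hcard : Fintype.card (Fin n ⊕ Bool) = n + 2 := by simp
  -- trees have n+1 edges
  have hT₁ : T₁.IsTree := ⟨h₁.2.1, h₁.2.2⟩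
  have hT₂ : T₂.IsTree := ⟨h₂.2.1, h₂.2.2⟩
  have e₁ : T₁.edgeFinset.card = n + 1 := by
    have := hT₁.card_edgeFinset; rw [hcard] at this; omega
  have e₂ : T₂.edgeFinset.card = n + 1 := by
    have := hT₂.card_edgeFinset; rw [hcard] at this; omega
  have s₁ : ∑ x, T₁.degree x = 2 * (n + 1) := by
    rw [T₁.sum_degrees_eq_twice_card_edges, e₁]
  have s₂ : ∑ x, T₂.degree x = 2 * (n + 1) := by
    rw [T₂.sum_degrees_eq_twice_card_edges, e₂]
  -- degree sum of G
  have sG : ∑ x, (pathStarPlus n).degree x = 4 * n + 4 := by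
    rw [Fintype.sum_sum_type]
    have h1 : ∀ a : Fin n, (pathStarPlus n).degree (Sum.inl a) = 3 :=
      fun a => psp_degree_inl n hn a
    have h2 : ∑ b : Bool, (pathStarPlus n).degree (Sum.inr b) = (n + 1) + 3 := by
      rw [Fintype.sum_bool, psp_degree_u n, psp_degree_v n hn]; omega
    rw [h2]
    simp only [h1, Finset.sum_const, Finset.card_univ, Fintype.card_fin, smul_eq_mul]
    omega
  -- degree additivity
  have hdisj : ∀ x, Disjoint (T₁.neighborFinset x) (T₂.neighborFinset x) := by
    intro x
    rw [Finset.disjoint_left]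
    intro y hy₁ hy₂
    rw [mem_neighborFinset] at hy₁ hy₂
    exact Set.disjoint_left.mp hedge (T₁.mem_edgeSet.mpr hy₁) (T₂.mem_edgeSet.mpr hy₂)
  have hle : ∀ x, T₁.degree x + T₂.degree x ≤ (pathStarPlus n).degree x := by
    intro x
    rw [degree, degree, degree, ← Finset.card_union_of_disjoint (hdisj x)]
    apply Finset.card_le_card
    intro y hy
    rw [Finset.mem_union, mem_neighborFinset, mem_neighborFinset] at hy
    rw [mem_neighborFinset]
    rcases hy with hy | hy
    · exact h₁.1 hy
    · exact h₂.1 hy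
  have key : ∀ x, T₁.degree x + T₂.degree x = (pathStarPlus n).degree x := by
    have hsum : ∑ x, (T₁.degree x + T₂.degree x) = ∑ x, (pathStarPlus n).degree x := by
      rw [Finset.sum_add_distrib, s₁, s₂, sG]; omega
    have := (Finset.sum_eq_sum_iff_of_le (fun i _ => hle i)).mp hsum
    exact fun x => this x (Finset.mem_univ x)
  -- minimum degree 1
  have p₁ : ∀ x, 1 ≤ T₁.degree x :=
    connected_one_le_degree h₁.2.1 (by omega) 
  have p₂ : ∀ x, 1 ≤ T₂.degree x :=
    connected_one_le_degree h₂.2.1 (by omega)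
  -- membership in innerSet via degree
  have mem₁ : ∀ x, x ∈ innerSet T₁ ↔ 2 ≤ T₁.degree x := by
    intro x; rw [innerSet, Set.mem_setOf_eq, ncard_neighborSet_eq_degree]
  have mem₂ : ∀ x, x ∈ innerSet T₂ ↔ 2 ≤ T₂.degree x := by
    intro x; rw [innerSet, Set.mem_setOf_eq, ncard_neighborSet_eq_degree]
  -- every vertex is inner in exactly one tree
  have hnb : ∀ x, ¬(2 ≤ T₁.degree x ∧ 2 ≤ T₂.degree x) := by
    rintro x ⟨a, b⟩
    exact Set.disjoint_left.mp hinner ((mem₁ x).mpr a) ((mem₂ x).mpr b)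
  have h3 : ∀ x, 3 ≤ (pathStarPlus n).degree x := by
    intro x
    rcases x with a | b
    · rw [psp_degree_inl n hn a]
    · cases b
      · rw [psp_degree_u n]; omega
      · rw [psp_degree_v n hn]
  -- the finsets of inner vertices
  set J₁ : Finset (Fin n ⊕ Bool) := Finset.univ.filter (fun v => 2 ≤ T₁.degree v) with hJ₁
  set J₂ : Finset (Fin n ⊕ Bool) := Finset.univ.filter (fun v => 2 ≤ T₂.degree v) with hJ₂
  have hc₁ : (innerSet T₁).ncard = J₁.card := by
    rw [show innerSet T₁ = ↑J₁ by ext x; simp [hJ₁, mem₁ x], Set.ncard_coe_finset]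
  have hc₂ : (innerSet T₂).ncard = J₂.card := by
    rw [show innerSet T₂ = ↑J₂ by ext x; simp [hJ₂, mem₂ x], Set.ncard_coe_finset]
  have hcompl : J₂ = J₁ᶜ := by
    ext x
    simp only [hJ₁, hJ₂, Finset.mem_compl, Finset.mem_filter, Finset.mem_univ, true_and]
    have := key x; have := h3 x; have := hnb x; have := p₁ x; have := p₂ x
    omega
  have hsumcard : J₁.card + J₂.card = n + 2 := by
    rw [hcompl, Finset.card_compl, hcard]
    have : J₁.card ≤ n + 2 := by
      rw [← hcard, ← Finset.card_univ]; exact Finset.card_le_card (Finset.subset_univ _)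
    omega
  -- u is a leaf of T₂, so T₁.degree u = n
  have hd₂u : T₂.degree (Sum.inr false) = 1 := by
    have := p₂ (Sum.inr false)
    have h2 : ¬ 2 ≤ T₂.degree (Sum.inr false) := fun h => hu ((mem₂ _).mpr h)
    omega
  have hd₁u : T₁.degree (Sum.inr false) = n := by
    have := key (Sum.inr false)
    rw [psp_degree_u n] at this
    omega
  -- counting: J₁ has at most 2 elements
  have hserase : ∑ x ∈ Finset.univ.erase (Sum.inr false), T₁.degree x = n + 2 := by
    have := Finset.add_sum_erase Finset.univ (fun x => T₁.degree x) (Finset.mem_univ (Sum.inr false : Fin n ⊕ Bool))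
    rw [hd₁u, s₁] at this
    omega
  have hJ₁card : J₁.card ≤ 2 := by
    set A : Finset (Fin n ⊕ Bool) := J₁.erase (Sum.inr false) with hA
    have hAsub : A ⊆ Finset.univ.erase (Sum.inr false) :=
      Finset.erase_subset_erase _ (Finset.subset_univ _)
    have hsplit : ∑ x ∈ (Finset.univ.erase (Sum.inr false)) \ A, T₁.degree x
        + ∑ x ∈ A, T₁.degree x = ∑ x ∈ Finset.univ.erase (Sum.inr false), T₁.degree x :=
      Finset.sum_sdiff hAsub
    have hA2 : 2 * A.card ≤ ∑ x ∈ A, T₁.degree x := by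
      calc 2 * A.card = ∑ _x ∈ A, 2 := by rw [Finset.sum_const, smul_eq_mul]; ring
        _ ≤ ∑ x ∈ A, T₁.degree x := Finset.sum_le_sum (fun i hi => by
            have := Finset.mem_of_mem_erase hi
            rw [hJ₁, Finset.mem_filter] at this
            exact this.2)
    have hA1 : ((Finset.univ.erase (Sum.inr false)) \ A).card
        ≤ ∑ x ∈ (Finset.univ.erase (Sum.inr false)) \ A, T₁.degree x := by
      calc ((Finset.univ.erase (Sum.inr false)) \ A).card
          = ∑ _x ∈ (Finset.univ.erase (Sum.inr false)) \ A, 1 := by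
            rw [Finset.sum_const, smul_eq_mul]; ring
        _ ≤ _ := Finset.sum_le_sum (fun i _ => p₁ i)
    have hcards : ((Finset.univ.erase (Sum.inr false)) \ A).card + A.card
        = (Finset.univ.erase (Sum.inr false)).card := Finset.card_sdiff_add_card_eq_card hAsub
    have hucard : ((Finset.univ : Finset (Fin n ⊕ Bool)).erase (Sum.inr false)).card = n + 1 := by
      rw [Finset.card_erase_of_mem (Finset.mem_univ _), Finset.card_univ, hcard]
      omega
    have hJA : J₁.card ≤ A.card + 1 := by
      calc J₁.card ≤ (insert (Sum.inr false : Fin n ⊕ Bool) A).card :=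
            Finset.card_le_card (Finset.subset_insert_iff.mpr (Finset.Subset.refl A))
        _ ≤ A.card + 1 := Finset.card_insert_le _ _
    omega
  rw [hc₁, hc₂]
  omega


/-- Any two completely independent spanning trees of `Pₙ⁺` (n ≥ 3) have numbers of
inner vertices differing by at least `n - 2`. -/
theorem pathStarPlus_unbalanced_cist (n : ℕ) (hn : 3 ≤ n)
    (T₁ T₂ : SimpleGraph (Fin n ⊕ Bool))
    (h₁ : IsSpanningTree (pathStarPlus n) T₁)
    (h₂ : IsSpanningTree (pathStarPlus n) T₂)
    (hedge : Disjoint T₁.edgeSet T₂.edgeSet)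
    (hinner : Disjoint (innerSet T₁) (innerSet T₂)) :
    (n : ℤ) - 2 ≤ |((innerSet T₁).ncard : ℤ) - ((innerSet T₂).ncard : ℤ)| := by

  by_cases hcase : Sum.inr false ∈ innerSet T₂
  · have hnot : Sum.inr false ∉ innerSet T₁ := fun h => Set.disjoint_left.mp hinner h hcase
    have := aux_cist n hn T₂ T₁ h₂ h₁ hedge.symm hinner.symm hnot
    calc (n : ℤ) - 2 ≤ ((innerSet T₁).ncard : ℤ) - ((innerSet T₂).ncard : ℤ) := this
      _ ≤ _ := le_abs_self _
  · have := aux_cist n hn T₁ T₂ h₁ h₂ hedge hinner hcase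
    rw [abs_sub_comm]
    calc (n : ℤ) - 2 ≤ ((innerSet T₂).ncard : ℤ) - ((innerSet T₁).ncard : ℤ) := this
      _ ≤ _ := le_abs_self _
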